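/- arXiv:math/0607229 — 2 statements merged into one kernel-verified Lean document; each statement's English description precedes it below -/
import Mathlib

section
/- Let X = U ∪ V with U, V open, W = U ∩ V, and suppose U and V are path-connected while W has at least three path-components; assume the pairs (U,J), (V,J), (W,J) are connected where J meets each path-component of W in exactly one point. Then the fundamental group of X contains a free group of rank 2 as a retract; in particular π₁(X) is nonabelian. -/
/-!
A function `τ : X → G` to a group that is constant on the path-components of `U ∩ V` defines a
homomorphism `π₁(X, p) → G`: cut a loop into segments lying in `U` or in `V` and multiply, over
the `V`-segments in order, `τ (start) * τ (end)⁻¹`. The product does not depend on the cut,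
since relabelling a segment is only possible when it lies in `U ∩ V`, and it is invariant
under homotopy, cutting the homotopy into a grid of cells lying in `U` or in `V`.

Choose two points `q₀, q₁` of `J` other than `p` and let `τ` send their path-components to the
generators of the free group on two letters and everything else to `1`. The loop that runs in
`V` from `p` to `qᵢ` and back in `U` is sent to the `i`-th generator, so the homomorphism has a
section, and the images of the generators do not commute.
-/

namespace CoverWord

open Set

section SegmentProd

variable {G : Type*} [Group G]

def segmentProd (d : ℕ → G) (L : ℕ → Bool) (n : ℕ) : G :=
  ((List.range n).map fun i => if L i then 1 else d i * (d (i + 1))⁻¹).prod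

@[simp] theorem segmentProd_zero (d : ℕ → G) (L : ℕ → Bool) : segmentProd d L 0 = 1 := rfl

theorem segmentProd_succ (d : ℕ → G) (L : ℕ → Bool) (n : ℕ) :
    segmentProd d L (n + 1) = segmentProd d L n * if L n then 1 else d n * (d (n + 1))⁻¹ := by
  simp [segmentProd, List.range_succ]

theorem segmentProd_succ' (d : ℕ → G) (L : ℕ → Bool) (n : ℕ) :
    segmentProd d L (n + 1) = (if L 0 then 1 else d 0 * (d 1)⁻¹) *
      segmentProd (fun i => d (i + 1)) (fun i => L (i + 1)) n := by
  simp [segmentProd, List.range_succ_eq_map, Function.comp_def]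

theorem segmentProd_add (d : ℕ → G) (L : ℕ → Bool) (n m : ℕ) :
    segmentProd d L (n + m) =
      segmentProd d L n * segmentProd (fun i => d (n + i)) (fun i => L (n + i)) m := by
  simp [segmentProd, List.range_add, Function.comp_def, add_assoc]

theorem segmentProd_congr {d e : ℕ → G} {L L' : ℕ → Bool} {n : ℕ}
    (hd : ∀ i ≤ n, d i = e i) (hL : ∀ i < n, L i = L' i) :
    segmentProd d L n = segmentProd e L' n := by
  induction n with
  | zero => rfl
  | succ k ih =>
    rw [segmentProd_succ, segmentProd_succ, ih (fun i hi => hd i (by omega))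
      (fun i hi => hL i (by omega)), hL k (by omega), hd k (by omega), hd (k + 1) le_rfl]

theorem segmentProd_eq_one {d : ℕ → G} {L : ℕ → Bool} {n : ℕ}
    (h : ∀ i < n, d i = d (i + 1)) : segmentProd d L n = 1 := by
  induction n with
  | zero => rfl
  | succ k ih => simp [segmentProd_succ, ih (fun i hi => h i (by omega)), h k (by omega)]

/-- Inside a run of `false` labels the product telescopes, and `true` labels contribute
nothing. -/
theorem segmentProd_eq_of_eq_at_label_changes {d e : ℕ → G} {L : ℕ → Bool} {n : ℕ}
    (h0 : d 0 = e 0) (hn : d n = e n)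
    (hchange : ∀ i, 0 < i → i < n → L (i - 1) ≠ L i → d i = e i) :
    segmentProd d L n = segmentProd e L n := by
  -- the factor `d k` opens the telescoping run that starts at a `false` label `k`
  have key : ∀ k ≤ n, segmentProd d L k * (if k < n ∧ L k = false then d k else 1) =
      segmentProd e L k * (if k < n ∧ L k = false then e k else 1) := by
    intro k hk
    induction k with
    | zero => split_ifs <;> simp [h0]
    | succ k ih =>
      have ih := ih (by omega)
      have hnext : (k + 1 < n ∧ L (k + 1) = false ↔ L k = true) → d (k + 1) = e (k + 1) := by
        intro hiff
        rcases Nat.lt_or_ge (k + 1) n with hlt | hge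
        · exact hchange (k + 1) k.succ_pos hlt (by cases h : L k <;> simp_all)
        · rwa [le_antisymm hk hge]
      rw [segmentProd_succ, segmentProd_succ]
      cases hL : L k <;> simp only [hL, show k < n by omega, true_and, Bool.true_eq_false,
          and_false, if_true, if_false, Bool.false_eq_true, mul_one] at ih ⊢
      · by_cases hopen : k + 1 < n ∧ L (k + 1) = false
        · simp only [hopen, and_self, if_true, ← mul_assoc, inv_mul_cancel_right, ih]
        · rw [if_neg hopen, if_neg hopen, hnext (by simp [hopen, hL])]
          simp only [mul_one, ← mul_assoc, ih]
      · by_cases hopen : k + 1 < n ∧ L (k + 1) = false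
        · simp only [hopen, and_self, if_true, ih, hnext (by simp [hopen, hL])]
        · simp only [hopen, if_false, mul_one, ih]
  simpa using key n le_rfl

end SegmentProd

section Subdivision

variable {X : Type*} {G : Type*} [Group G] {U V : Set X} {τ : X → G}
  {f : ℝ → X} {A B : ℝ} {t : ℕ → ℝ} {L : ℕ → Bool} {n : ℕ}

theorem projIcc_mem_Icc {a b : unitInterval} {u : ℝ} (hu : u ∈ Icc (a : ℝ) b) :
    projIcc 0 1 zero_le_one u ∈ Icc a b :=
  ⟨projIcc_val zero_le_one a ▸ monotone_projIcc zero_le_one hu.1,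
    projIcc_val zero_le_one b ▸ monotone_projIcc zero_le_one hu.2⟩

theorem mem_inter_of_mem_cond {x : X} {b b' : Bool} (hb : x ∈ cond b U V)
    (hb' : x ∈ cond b' U V) (hne : b ≠ b') : x ∈ U ∩ V := by
  cases b <;> cases b' <;> simp_all

theorem univ_subset_iUnion_preimage_cond {Y : Type*} (g : Y → X) (hUV : U ∪ V = univ) :
    univ ⊆ ⋃ b, g ⁻¹' cond b U V := fun y _ =>
  mem_iUnion.2 <| (hUV.symm ▸ mem_univ (g y) : g y ∈ U ∪ V).elim (⟨true, ·⟩) (⟨false, ·⟩)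

/-- `A = t 0 ≤ t 1 ≤ ⋯ ≤ t n = B` cuts `[A, B]` into segments that `f` maps into `U`
(label `true`) or into `V` (label `false`). -/
structure IsSubdivision (U V : Set X) (f : ℝ → X) (A B : ℝ) (t : ℕ → ℝ) (L : ℕ → Bool)
    (n : ℕ) : Prop where
  t_zero : t 0 = A
  t_last : t n = B
  monotone : Monotone t
  mapsTo : ∀ i < n, MapsTo f (Icc (t i) (t (i + 1))) (cond (L i) U V)

namespace IsSubdivision

theorem mem_Icc (h : IsSubdivision U V f A B t L n) {i : ℕ} (hi : i ≤ n) : t i ∈ Icc A B :=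
  ⟨h.t_zero ▸ h.monotone (Nat.zero_le i), h.t_last ▸ h.monotone hi⟩

theorem tail (h : IsSubdivision U V f A B t L (n + 1)) :
    IsSubdivision U V f (t 1) B (fun i => t (i + 1)) (fun i => L (i + 1)) n :=
  ⟨rfl, h.t_last, fun _ _ hij => h.monotone (by omega), fun i hi => h.mapsTo (i + 1) (by omega)⟩

theorem update_zero (h : IsSubdivision U V f A B t L (n + 1)) {s : ℝ} (hs : s ∈ Icc A (t 1)) :
    IsSubdivision U V f s B (Function.update t 0 s) L (n + 1) := by
  refine ⟨by simp, by simpa using h.t_last, monotone_nat_of_le_succ fun i => ?_, fun i hi => ?_⟩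
  · rcases i with _ | i
    · simpa using hs.2
    · simpa using h.monotone (Nat.le_succ (i + 1))
  · rcases i with _ | i
    · refine (h.mapsTo 0 hi).mono_left (Icc_subset_Icc ?_ ?_) <;> simp [h.t_zero, hs.1]
    · simpa using h.mapsTo (i + 1) hi

theorem append {C : ℝ} {t' : ℕ → ℝ} {L' : ℕ → Bool} {m : ℕ}
    (h : IsSubdivision U V f A B t L n) (h' : IsSubdivision U V f B C t' L' m) :
    IsSubdivision U V f A C (fun i => if i < n then t i else t' (i - n))
      (fun i => if i < n then L i else L' (i - n)) (n + m) := by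
  have hnB : t n = t' 0 := h.t_last.trans h'.t_zero.symm
  refine ⟨?_, by simpa using h'.t_last, monotone_nat_of_le_succ fun i => ?_, fun i hi => ?_⟩
  · rcases n.eq_zero_or_pos with rfl | hn
    · simpa [← hnB] using h.t_zero
    · simpa [hn] using h.t_zero
  · by_cases hi : i + 1 < n
    · simpa [hi, show i < n by omega] using h.monotone (Nat.le_succ i)
    by_cases hi' : i < n
    · simpa [hi, hi', show i + 1 - n = 0 by omega, ← hnB] using h.monotone (show i ≤ n by omega)
    · simpa [hi, hi', show i + 1 - n = i - n + 1 by omega] using h'.monotone (Nat.le_succ (i - n))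
  · by_cases hi' : i < n
    · by_cases hi : i + 1 < n
      · simpa [hi, hi'] using h.mapsTo i hi'
      · simpa [hi, hi', show i + 1 - n = 0 by omega, ← hnB, show i + 1 = n by omega]
          using h.mapsTo i hi'
    · simpa [show ¬ i + 1 < n by omega, hi', show i + 1 - n = i - n + 1 by omega]
        using h'.mapsTo (i - n) (by omega)

theorem segmentProd_eq_one_of_eq (h : IsSubdivision U V f A B t L n) (hAB : A = B) :
    segmentProd (τ ∘ f ∘ t) L n = 1 := by
  refine segmentProd_eq_one fun i hi => ?_
  have hA : ∀ j ≤ n, t j = A := fun j hj => le_antisymm (hAB ▸ (h.mem_Icc hj).2) (h.mem_Icc hj).1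
  simp [hA i hi.le, hA (i + 1) hi]

end IsSubdivision

theorem isSubdivision_zero_one {f : ℝ → X} {b : Bool} (hf : MapsTo f (Icc 0 1) (cond b U V)) :
    IsSubdivision U V f 0 1 (fun i => min (i : ℝ) 1) (fun _ => b) 1 :=
  ⟨by simp, by simp, fun _ _ hij => min_le_min_right 1 (Nat.cast_le.2 hij),
    fun i hi => by simpa [Nat.lt_one_iff.1 hi] using hf⟩

open Classical in
/-- Independent of the chosen subdivision by `IsSubdivision.segmentProd_eq`; junk value `1`
when `[A, B]` has no subdivision. -/
noncomputable def pathWord (U V : Set X) (τ : X → G) (f : ℝ → X) (A B : ℝ) : G :=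
  if h : ∃ s : (ℕ → ℝ) × (ℕ → Bool) × ℕ, IsSubdivision U V f A B s.1 s.2.1 s.2.2 then
    segmentProd (τ ∘ f ∘ h.choose.1) h.choose.2.1 h.choose.2.2
  else 1

variable [TopologicalSpace X]

theorem joinedIn_of_mapsTo_Icc {W : Set X} {a b : ℝ} (hf : ContinuousOn f (Icc a b))
    (hab : a ≤ b) (hW : MapsTo f (Icc a b) W) : JoinedIn W (f a) (f b) :=
  (((convex_Icc a b).isPathConnected (nonempty_Icc.2 hab)).image' hf).joinedIn _
    (mem_image_of_mem f (left_mem_Icc.2 hab)) _ (mem_image_of_mem f (right_mem_Icc.2 hab))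
    |>.mono (image_subset_iff.2 hW)

namespace IsSubdivision

variable (hτ : ∀ x y, JoinedIn (U ∩ V) x y → τ x = τ y)
include hτ

theorem segmentProd_eq_mul_update_zero (hf : Continuous f)
    (h : IsSubdivision U V f A B t L (n + 1)) {s : ℝ} (hs : s ∈ Icc A (t 1)) {b : Bool}
    (hb : MapsTo f (Icc A s) (cond b U V)) :
    segmentProd (τ ∘ f ∘ t) L (n + 1) = (if b then 1 else τ (f A) * (τ (f s))⁻¹) *
      segmentProd (τ ∘ f ∘ Function.update t 0 s) L (n + 1) := by
  have hfirst : MapsTo f (Icc A s) (cond (L 0) U V) :=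
    (h.mapsTo 0 n.succ_pos).mono_left (Icc_subset_Icc h.t_zero.le hs.2)
  have hτAs : b ≠ L 0 → τ (f A) = τ (f s) := fun hne =>
    hτ _ _ <| joinedIn_of_mapsTo_Icc hf.continuousOn hs.1 fun x hx =>
      mem_inter_of_mem_cond (hb hx) (hfirst hx) hne
  simp only [segmentProd_succ', Function.comp_apply, Function.update_self,
    Function.update_of_ne (Nat.succ_ne_zero _), h.t_zero, ← mul_assoc]
  congr 1
  cases b <;> cases hL : L 0 <;> simp only [hL, ne_eq, Bool.false_eq_true, Bool.true_eq_false,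
    not_false_eq_true, forall_const, if_true, if_false] at hτAs ⊢ <;>
    simp [hτAs]

theorem segmentProd_eq (hf : Continuous f) {t' : ℕ → ℝ} {L' : ℕ → Bool} {m : ℕ}
    (h : IsSubdivision U V f A B t L n) (h' : IsSubdivision U V f A B t' L' m) :
    segmentProd (τ ∘ f ∘ t) L n = segmentProd (τ ∘ f ∘ t') L' m := by
  induction hN : n + m using Nat.strong_induction_on generalizing A n m t L t' L' with
  | _ N ih =>
  obtain _ | n := n
  · rw [segmentProd_zero, h'.segmentProd_eq_one_of_eq (h.t_zero.symm.trans h.t_last)]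
  obtain _ | m := m
  · rw [segmentProd_zero, h.segmentProd_eq_one_of_eq (h'.t_zero.symm.trans h'.t_last)]
  -- start `h'` at the end `t 1` of the shorter first segment and recurse on `[t 1, B]`
  wlog hle : t 1 ≤ t' 1 generalizing n m t L t' L'
  · exact (this m h' n h (by omega) (le_of_not_ge hle)).symm
  have hs : t 1 ∈ Icc A (t' 1) := ⟨h.t_zero ▸ h.monotone zero_le_one, hle⟩
  have hb : MapsTo f (Icc A (t 1)) (cond (L 0) U V) := h.t_zero ▸ h.mapsTo 0 n.succ_pos
  rw [segmentProd_succ', h'.segmentProd_eq_mul_update_zero hτ hf hs hb]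
  simp only [Function.comp_apply, h.t_zero]
  congr 1
  exact ih _ (by omega) h.tail (h'.update_zero hs) rfl

end IsSubdivision

end Subdivision

section PathWord

variable {X : Type*} [TopologicalSpace X] {G : Type*} [Group G] {U V : Set X} {τ : X → G}
  {f : ℝ → X} {A B C : ℝ} {t : ℕ → ℝ} {L : ℕ → Bool} {n : ℕ}

theorem exists_isSubdivision (hU : IsOpen U) (hV : IsOpen V) (hUV : U ∪ V = univ)
    (hf : Continuous f) (hAB : A ≤ B) : ∃ t L n, IsSubdivision U V f A B t L n := by
  obtain ⟨t, ht0, hmono, ⟨n, hn⟩, hcover⟩ := exists_monotone_Icc_subset_open_cover_Icc hAB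
    (c := fun b : Bool => (fun x : Icc A B => f x) ⁻¹' cond b U V)
    (fun b => (hf.comp continuous_subtype_val).isOpen_preimage _ (by cases b <;> assumption))
    (univ_subset_iUnion_preimage_cond _ hUV)
  choose L hL using hcover
  refine ⟨fun i => t i, L, n, ht0, hn n le_rfl, fun i j hij => hmono hij, fun i _ x hx => ?_⟩
  exact hL i (show (⟨x, (t i).2.1.trans hx.1, hx.2.trans (t (i + 1)).2.2⟩ : Icc A B) ∈
    Icc (t i) (t (i + 1)) from hx)

variable (hτ : ∀ x y, JoinedIn (U ∩ V) x y → τ x = τ y)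
include hτ

theorem IsSubdivision.pathWord_eq (hf : Continuous f) (h : IsSubdivision U V f A B t L n) :
    pathWord U V τ f A B = segmentProd (τ ∘ f ∘ t) L n := by
  have hex : ∃ s : (ℕ → ℝ) × (ℕ → Bool) × ℕ, IsSubdivision U V f A B s.1 s.2.1 s.2.2 :=
    ⟨(t, L, n), h⟩
  rw [pathWord, dif_pos hex]
  exact hex.choose_spec.segmentProd_eq hτ hf h

theorem pathWord_append (hU : IsOpen U) (hV : IsOpen V) (hUV : U ∪ V = univ)
    (hf : Continuous f) (hAB : A ≤ B) (hBC : B ≤ C) :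
    pathWord U V τ f A C = pathWord U V τ f A B * pathWord U V τ f B C := by
  obtain ⟨t, L, n, h⟩ := exists_isSubdivision hU hV hUV hf hAB
  obtain ⟨t', L', m, h'⟩ := exists_isSubdivision hU hV hUV hf hBC
  rw [(h.append h').pathWord_eq hτ hf, h.pathWord_eq hτ hf, h'.pathWord_eq hτ hf,
    segmentProd_add]
  congr 1
  · refine segmentProd_congr (fun i hi => ?_) (fun i hi => by simp [hi])
    rcases hi.lt_or_eq with hi | rfl
    · simp [hi]
    · simp [h.t_last, h'.t_zero]
  · exact segmentProd_congr (fun i _ => by simp) (fun i _ => by simp)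

theorem pathWord_comp_affine (hU : IsOpen U) (hV : IsOpen V) (hUV : U ∪ V = univ)
    (hf : Continuous f) {g : ℝ → X} (hg : Continuous g) {c r : ℝ} (hr : 0 < r) (hAB : A ≤ B)
    (hgf : ∀ x ∈ Icc A B, g x = f (c + r * x)) :
    pathWord U V τ g A B = pathWord U V τ f (c + r * A) (c + r * B) := by
  obtain ⟨t, L, n, h⟩ :=
    exists_isSubdivision (A := c + r * A) (B := c + r * B) hU hV hUV hf (by gcongr)
  have hinv : ∀ y, c + r * ((y - c) / r) = y := fun y => by field_simp; ring
  have hle : ∀ x y, c + r * x ≤ c + r * y ↔ x ≤ y := fun x y => by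
    rw [add_le_add_iff_left, mul_le_mul_iff_of_pos_left hr]
  have hmem : ∀ x, c + r * x ∈ Icc (c + r * A) (c + r * B) → x ∈ Icc A B := fun x hx =>
    ⟨(hle _ _).1 hx.1, (hle _ _).1 hx.2⟩
  have hsub : IsSubdivision U V g A B (fun i => (t i - c) / r) L n := by
    refine ⟨?_, ?_, fun i j hij => ?_, fun i hi x hx => ?_⟩
    · rw [h.t_zero, add_sub_cancel_left, mul_div_cancel_left₀ _ hr.ne']
    · rw [h.t_last, add_sub_cancel_left, mul_div_cancel_left₀ _ hr.ne']
    · exact div_le_div_of_nonneg_right (by linarith [h.monotone hij]) hr.le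
    · have hx' : c + r * x ∈ Icc (t i) (t (i + 1)) := by
        rw [← hinv (t i), ← hinv (t (i + 1))]
        exact ⟨(hle _ _).2 hx.1, (hle _ _).2 hx.2⟩
      rw [hgf x (hmem x ⟨h.mem_Icc hi.le |>.1.trans hx'.1, hx'.2.trans (h.mem_Icc hi).2⟩)]
      exact h.mapsTo i hi hx'
  rw [hsub.pathWord_eq hτ hg, h.pathWord_eq hτ hf]
  refine segmentProd_congr (fun i hi => ?_) (fun _ _ => rfl)
  have hti := h.mem_Icc hi
  rw [← hinv (t i)] at hti
  simp only [Function.comp_apply, hgf _ (hmem _ hti), hinv]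

/-- The two rows share a subdivision, and where its label changes the vertical edge between
them lies in `U ∩ V`. -/
theorem pathWord_eq_of_mapsTo_strip {F : ℝ → ℝ → X} (hF : Continuous (Function.uncurry F))
    {a b : ℝ} (hab : a ≤ b) {T : ℕ → ℝ} (hT0 : T 0 = 0) (hTn : T n = 1) (hT : Monotone T)
    (hcell : ∀ i < n, MapsTo (Function.uncurry F) (Icc a b ×ˢ Icc (T i) (T (i + 1)))
      (cond (L i) U V))
    (h0 : F a 0 = F b 0) (h1 : F a 1 = F b 1) :
    pathWord U V τ (F a) 0 1 = pathWord U V τ (F b) 0 1 := by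
  have hrow : ∀ s ∈ Icc a b, IsSubdivision U V (F s) 0 1 T L n := fun s hs =>
    ⟨hT0, hTn, hT, fun i hi u hu => hcell i hi (mk_mem_prod hs hu)⟩
  have hFs : ∀ s, Continuous (F s) := fun s => hF.comp (Continuous.prodMk_right s)
  rw [(hrow a (left_mem_Icc.2 hab)).pathWord_eq hτ (hFs a),
    (hrow b (right_mem_Icc.2 hab)).pathWord_eq hτ (hFs b)]
  refine segmentProd_eq_of_eq_at_label_changes (by simp [hT0, h0]) (by simp [hTn, h1])
    fun i hi0 hin hne => hτ _ _ <| joinedIn_of_mapsTo_Icc (f := fun s => F s (T i))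
      (hF.comp (Continuous.prodMk_left (T i))).continuousOn hab fun s hs => ?_
  obtain ⟨k, rfl⟩ : ∃ k, i = k + 1 := ⟨i - 1, by omega⟩
  refine mem_inter_of_mem_cond (hcell k (by omega) (mk_mem_prod hs ?_))
    (hcell (k + 1) hin (mk_mem_prod hs ?_)) hne
  · exact ⟨hT k.le_succ, le_rfl⟩
  · exact ⟨le_rfl, hT (k + 1).le_succ⟩

theorem pathWord_extend_eq_of_homotopic (hU : IsOpen U) (hV : IsOpen V) (hUV : U ∪ V = univ)
    {x y : X} {γ δ : Path x y} (h : γ.Homotopic δ) :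
    pathWord U V τ γ.extend 0 1 = pathWord U V τ δ.extend 0 1 := by
  obtain ⟨H⟩ := h
  obtain ⟨T, hT0, hT, ⟨n, hn⟩, hcell⟩ :=
    exists_monotone_Icc_subset_open_cover_unitInterval_prod_self
      (c := fun b : Bool => H ⁻¹' cond b U V)
      (fun b => H.continuous.isOpen_preimage _ (by cases b <;> assumption))
      (univ_subset_iUnion_preimage_cond _ hUV)
  choose L hL using hcell
  set F : ℝ → ℝ → X := fun s u => H (projIcc 0 1 zero_le_one s, projIcc 0 1 zero_le_one u)
  have hF : Continuous (Function.uncurry F) := H.continuous.comp <|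
    (continuous_projIcc.comp continuous_fst).prodMk (continuous_projIcc.comp continuous_snd)
  have hrows : ∀ j, pathWord U V τ (F (T j)) 0 1 = pathWord U V τ (F (T (j + 1))) 0 1 :=
    fun j => pathWord_eq_of_mapsTo_strip hτ hF (hT j.le_succ) (n := n) (L := L j)
      (congrArg Subtype.val hT0) (congrArg Subtype.val (hn n le_rfl)) (fun i j hij => hT hij)
      (fun i _ p hp => hL j i ⟨projIcc_mem_Icc hp.1, projIcc_mem_Icc hp.2⟩)
      (by simp [F]) (by simp [F])
  have hF0 : F 0 = γ.extend := funext fun u => by simp [F, Path.extend, IccExtend]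
  have hF1 : F 1 = δ.extend := funext fun u => by simp [F, Path.extend, IccExtend]
  have hall : ∀ j, pathWord U V τ (F (T j)) 0 1 = pathWord U V τ (F 0) 0 1 := fun j => by
    induction j with
    | zero => simp [hT0]
    | succ j ih => rw [← hrows, ih]
  rw [← hF0, ← hF1, ← hall n, hn n le_rfl]
  rfl

end PathWord

section FundamentalGroup

variable {X : Type*} [TopologicalSpace X] {G : Type*} [Group G] {U V : Set X} {τ : X → G}
  (hτ : ∀ x y, JoinedIn (U ∩ V) x y → τ x = τ y)
  (hU : IsOpen U) (hV : IsOpen V) (hUV : U ∪ V = univ)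

include hτ in
theorem pathWord_extend_of_forall_mem {x y : X} (γ : Path x y) {b : Bool}
    (hγ : ∀ s, γ s ∈ cond b U V) :
    pathWord U V τ γ.extend 0 1 = if b then 1 else τ x * (τ y)⁻¹ := by
  rw [(isSubdivision_zero_one fun s hs => by rw [γ.extend_apply hs]; exact hγ _).pathWord_eq hτ
    γ.continuous_extend]
  simp [segmentProd_succ]

include hτ hU hV hUV in
theorem pathWord_extend_trans {x y z : X} (γ : Path x y) (δ : Path y z) :
    pathWord U V τ (γ.trans δ).extend 0 1 =
      pathWord U V τ γ.extend 0 1 * pathWord U V τ δ.extend 0 1 := by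
  rw [pathWord_append hτ hU hV hUV (γ.trans δ).continuous_extend (by norm_num : (0 : ℝ) ≤ 1 / 2)
    (by norm_num : (1 / 2 : ℝ) ≤ 1)]
  congr 1
  · rw [pathWord_comp_affine hτ hU hV hUV γ.continuous_extend (γ.trans δ).continuous_extend
      (c := 0) two_pos (by norm_num)
      fun s hs => by rw [Path.extend_trans_of_le_half _ _ hs.2, zero_add]]
    norm_num
  · rw [pathWord_comp_affine hτ hU hV hUV δ.continuous_extend (γ.trans δ).continuous_extend
      (c := -1) two_pos (by norm_num)
      fun s hs => by rw [Path.extend_trans_of_half_le _ _ hs.1, neg_add_eq_sub]]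
    norm_num

noncomputable def quotientWord {x y : X} : Path.Homotopic.Quotient x y → G :=
  Quotient.lift (fun γ : Path x y => pathWord U V τ γ.extend 0 1)
    fun _ _ h => pathWord_extend_eq_of_homotopic hτ hU hV hUV h

theorem quotientWord_trans {x y z : X} (q : Path.Homotopic.Quotient x y)
    (q' : Path.Homotopic.Quotient y z) :
    quotientWord hτ hU hV hUV (q.trans q') =
      quotientWord hτ hU hV hUV q * quotientWord hτ hU hV hUV q' := by
  induction q, q' using Path.Homotopic.Quotient.ind₂ with
  | mk γ δ => exact pathWord_extend_trans hτ hU hV hUV γ δ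

/-- Inverted because `g * h` in `FundamentalGroup X p` is the class of `h` followed by `g`. -/
noncomputable def fundamentalGroupHom (p : X) : FundamentalGroup X p →* G :=
  MonoidHom.mk' (fun g => (quotientWord hτ hU hV hUV (FundamentalGroup.toPath g))⁻¹)
    fun g h => by
      change (quotientWord hτ hU hV hUV ((FundamentalGroup.toPath h).trans
        (FundamentalGroup.toPath g)))⁻¹ = _
      rw [quotientWord_trans, mul_inv_rev]

theorem exists_fundamentalGroupHom_eq (hUc : IsPathConnected U) (hVc : IsPathConnected V)
    {p q : X} (hp : p ∈ U ∩ V) (hq : q ∈ U ∩ V) :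
    ∃ g, fundamentalGroupHom hτ hU hV hUV p g = τ q * (τ p)⁻¹ := by
  obtain ⟨γ, hγ⟩ := hVc.joinedIn p hp.2 q hq.2
  obtain ⟨δ, hδ⟩ := hUc.joinedIn q hq.1 p hp.1
  refine ⟨FundamentalGroup.fromPath (.mk (γ.trans δ)), ?_⟩
  change (pathWord U V τ (γ.trans δ).extend 0 1)⁻¹ = _
  rw [pathWord_extend_trans hτ hU hV hUV, pathWord_extend_of_forall_mem hτ γ (b := false) hγ,
    pathWord_extend_of_forall_mem hτ δ (b := true) hδ]
  simp

end FundamentalGroup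

end CoverWord

theorem FreeGroup.exists_comp_eq_id_of_of_mem_range {α H : Type*} [Group H]
    (ρ : H →* FreeGroup α) (h : ∀ a, FreeGroup.of a ∈ ρ.range) :
    ∃ ι : FreeGroup α →* H, ρ.comp ι = MonoidHom.id _ := by
  choose g hg using h
  exact ⟨FreeGroup.lift g, FreeGroup.ext_hom _ _ fun a => by simp [hg]⟩

theorem exists_joinedIn_invariant {X G : Type*} [TopologicalSpace X] [One G] {W : Set X}
    {p q₀ q₁ : X} (g₀ g₁ : G) (hq₀ : q₀ ∈ W) (hq₁ : q₁ ∈ W) (hp₀ : ¬JoinedIn W p q₀)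
    (hp₁ : ¬JoinedIn W p q₁) (h₁₀ : ¬JoinedIn W q₁ q₀) :
    ∃ τ : X → G, (∀ x y, JoinedIn W x y → τ x = τ y) ∧ τ p = 1 ∧ τ q₀ = g₀ ∧ τ q₁ = g₁ := by
  classical
  refine ⟨fun x => if JoinedIn W x q₀ then g₀ else if JoinedIn W x q₁ then g₁ else 1,
    fun x y hxy => ?_, by simp [hp₀, hp₁], by simp [JoinedIn.refl hq₀],
    by simp [h₁₀, JoinedIn.refl hq₁]⟩
  have hiff : ∀ z, JoinedIn W x z ↔ JoinedIn W y z := fun z => ⟨hxy.symm.trans, hxy.trans⟩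
  simp only [hiff]

/-- If `X = U ∪ V` with `U`, `V` open and path-connected and `W = U ∩ V` has at least
three path-components (witnessed by a set `J` meeting each path-component of `W` in
exactly one point and having at least three elements), then for any basepoint `p ∈ J`
the fundamental group of `X` has a free group of rank 2 as a retract; in particular it
is nonabelian. -/
theorem fundamentalGroup_retract_free_rank_two {X : Type*} [TopologicalSpace X]
    (U V : Set X) (hUopen : IsOpen U) (hVopen : IsOpen V)
    (hUV : U ∪ V = Set.univ)
    (hUpc : IsPathConnected U) (hVpc : IsPathConnected V)
    (J : Set X) (hJW : J ⊆ U ∩ V)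
    (hJmeets : ∀ w ∈ U ∩ V, ∃! x, x ∈ J ∧ JoinedIn (U ∩ V) w x)
    (a b c : X) (ha : a ∈ J) (hb : b ∈ J) (hc : c ∈ J)
    (hab : a ≠ b) (hac : a ≠ c) (hbc : b ≠ c)
    (p : X) (hp : p ∈ J) :
    (∃ (ι : FreeGroup (Fin 2) →* FundamentalGroup X p)
       (ρ : FundamentalGroup X p →* FreeGroup (Fin 2)),
        ρ.comp ι = MonoidHom.id (FreeGroup (Fin 2))) ∧
    ∃ g h : FundamentalGroup X p, g * h ≠ h * g := by
  obtain ⟨q₀, q₁, hq₀, hq₁, hq₀₁, hpq₀, hpq₁⟩ :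
      ∃ q₀ q₁, q₀ ∈ J ∧ q₁ ∈ J ∧ q₀ ≠ q₁ ∧ p ≠ q₀ ∧ p ≠ q₁ := by
    by_cases hpa : p = a
    · exact ⟨b, c, hb, hc, hbc, hpa ▸ hab, hpa ▸ hac⟩
    by_cases hpb : p = b
    · exact ⟨a, c, ha, hc, hac, hpa, hpb ▸ hbc⟩
    · exact ⟨a, b, ha, hb, hab, hpa, hpb⟩
  have hJ : ∀ x ∈ J, ∀ y ∈ J, JoinedIn (U ∩ V) x y → x = y := fun x hx y hy hxy =>
    (hJmeets x (hJW hx)).unique ⟨hx, JoinedIn.refl (hJW hx)⟩ ⟨hy, hxy⟩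
  obtain ⟨τ, hτ, hτp, hτ₀, hτ₁⟩ := exists_joinedIn_invariant (FreeGroup.of (0 : Fin 2))
    (.of 1) (hJW hq₀) (hJW hq₁) (fun h => hpq₀ (hJ p hp q₀ hq₀ h))
    (fun h => hpq₁ (hJ p hp q₁ hq₁ h)) (fun h => hq₀₁ (hJ q₁ hq₁ q₀ hq₀ h).symm)
  set ρ := CoverWord.fundamentalGroupHom hτ hUopen hVopen hUV p
  have hrange : ∀ q ∈ J, τ q ∈ ρ.range := fun q hq => by
    simpa [hτp] using CoverWord.exists_fundamentalGroupHom_eq hτ hUopen hVopen hUV hUpc hVpc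
      (hJW hp) (hJW hq)
  have hρ : ∀ i, FreeGroup.of i ∈ ρ.range := fun i => by
    fin_cases i
    exacts [hτ₀ ▸ hrange q₀ hq₀, hτ₁ ▸ hrange q₁ hq₁]
  obtain ⟨ι, hι⟩ := FreeGroup.exists_comp_eq_id_of_of_mem_range ρ hρ
  refine ⟨⟨ι, ρ, hι⟩, ι (.of 0), ι (.of 1), fun hcomm => ?_⟩
  have hfree := congrArg ρ hcomm
  simp only [map_mul, ← MonoidHom.comp_apply, hι, MonoidHom.id_apply] at hfree
  exact absurd hfree (by decide)
end

section
/- Let X = U ∪ V with U, V open and path-connected, and suppose the intersection W = U ∩ V has at least two path-components. Then for any p ∈ W, the fundamental group π₁(X, p) has ℤ as a retract; in particular π₁(X, p) is nontrivial. Consequently, if X is simply connected (or more generally π₁(X) does not retract onto ℤ), then the intersection of any two open path-connected subsets covering X is path-connected or empty. -/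
open Set unitInterval CategoryTheory

attribute [local instance] Path.Homotopic.setoid

namespace VKRetract

variable {X : Type*} [TopologicalSpace X]

open Classical in
/-- indicator (in `ℤ`) of being joined to `b` inside `U ∩ V`. -/
noncomputable def chi (U V : Set X) (b x : X) : ℤ :=
  if JoinedIn (U ∩ V) b x then 1 else 0

lemma chi_eq_of_joinedIn {U V : Set X} {b x y : X} (h : JoinedIn (U ∩ V) x y) :
    chi U V b x = chi U V b y := by
  classical
  unfold chi
  by_cases hx : JoinedIn (U ∩ V) b x
  · rw [if_pos hx, if_pos (hx.trans h)]
  · rw [if_neg hx, if_neg fun hy => hx (hy.trans h.symm)]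

/-- The straight path in `I` from `s` to `t` (for `s ≤ t`), staying in `Icc s t`. -/
def segPath (s t : I) (h : s ≤ t) : Path s t where
  toFun r := ⟨s.1 + r.1 * (t.1 - s.1), by
    have hst : (s : ℝ) ≤ t := h
    constructor
    · nlinarith [r.2.1, s.2.1]
    · nlinarith [r.2.2, t.2.2, r.2.1]⟩
  continuous_toFun := by
    apply Continuous.subtype_mk
    fun_prop
  source' := by ext; simp
  target' := by ext; simp

lemma segPath_mem (s t : I) (h : s ≤ t) (r : I) : segPath s t h r ∈ Icc s t := by
  have hst : (s : ℝ) ≤ t := h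
  constructor
  · show (s : ℝ) ≤ s + r * (t - s)
    nlinarith [r.2.1]
  · show (s : ℝ) + r * (t - s) ≤ t
    nlinarith [r.2.2, r.2.1]

lemma chi_comp_eq {U V : Set X} {b : X} (γ : C(I, X)) {s t : I} (hst : s ≤ t)
    (h : Icc s t ⊆ ⇑γ ⁻¹' (U ∩ V)) : chi U V b (γ s) = chi U V b (γ t) :=
  chi_eq_of_joinedIn ⟨(segPath s t hst).map γ.continuous,
    fun r => h (segPath_mem s t hst r)⟩

/-- `g` is a crossing-counting function for the curve `γ`. -/
def IsCount (U V : Set X) (b : X) (γ : C(I, X)) (g : I → ℤ) : Prop :=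
  ∀ s t : I, s ≤ t →
    (Icc s t ⊆ ⇑γ ⁻¹' U → g t = g s) ∧
    (Icc s t ⊆ ⇑γ ⁻¹' V → g t - g s = chi U V b (γ t) - chi U V b (γ s))

lemma minmax (f : I → ℤ) (x y : I) : f (min x y) + f (max x y) = f x + f y := by
  rcases le_total x y with h | h
  · rw [min_eq_left h, max_eq_right h]
  · rw [min_eq_right h, max_eq_left h, add_comm]

lemma exists_isCount (U V : Set X) (b : X) (hUo : IsOpen U) (hVo : IsOpen V)
    (hUV : U ∪ V = univ) (γ : C(I, X)) : ∃ g : I → ℤ, IsCount U V b γ g := by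
  classical
  set c : Bool → Set I := fun i => if i then ⇑γ ⁻¹' V else ⇑γ ⁻¹' U with hc
  have hco : ∀ i, IsOpen (c i) := by
    rintro (_ | _) <;> simp only [c, if_true, if_false, Bool.false_eq_true] <;>
      [exact hUo.preimage γ.continuous; exact hVo.preimage γ.continuous]
  have hcov : univ ⊆ ⋃ i, c i := by
    intro x _
    have hx : γ x ∈ U ∪ V := by rw [hUV]; trivial
    rcases hx with hx | hx
    · exact mem_iUnion.2 ⟨false, by simpa [c] using hx⟩
    · exact mem_iUnion.2 ⟨true, by simpa [c] using hx⟩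
  obtain ⟨pt, hpt0, hmono, ⟨N, hptN⟩, hsub⟩ :=
    exists_monotone_Icc_subset_open_cover_unitInterval hco hcov
  choose L hL using hsub
  set f : I → ℤ := fun r => chi U V b (γ r) with hf
  refine ⟨fun t => ∑ k ∈ Finset.range N,
    (if L k then f (min t (pt (k + 1))) - f (min t (pt k)) else 0), ?_⟩
  intro s t hst
  set q : ℕ → I := fun k => max s (min t (pt k)) with hq
  have hq0 : q 0 = s := by
    simp only [hq, hpt0]
    rw [min_eq_right (nonneg' : 0 ≤ t), max_eq_left (nonneg' : 0 ≤ s)]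
  have hqN : q N = t := by
    simp only [hq, hptN N le_rfl]
    rw [min_eq_left (le_one' : t ≤ 1), max_eq_right hst]
  have hqmono : ∀ k, q k ≤ q (k + 1) := fun k =>
    max_le_max le_rfl (min_le_min le_rfl (hmono (Nat.le_succ k)))
  have hqst : ∀ k, Icc (q k) (q (k + 1)) ⊆ Icc s t := by
    intro k r hr
    exact ⟨(le_max_left _ _).trans hr.1, hr.2.trans (max_le hst (min_le_left _ _))⟩
  have hpiece : ∀ k, q k = q (k + 1) ∨ Icc (q k) (q (k + 1)) ⊆ Icc (pt k) (pt (k + 1)) := by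
    intro k
    rcases le_total t (pt k) with h | h
    · left
      simp only [hq]
      rw [min_eq_left h, min_eq_left (h.trans (hmono (Nat.le_succ k)))]
    · rcases le_total (pt (k + 1)) s with h' | h'
      · left
        simp only [hq]
        rw [max_eq_left ((min_le_right _ _).trans ((hmono (Nat.le_succ k)).trans h')),
          max_eq_left ((min_le_right _ _).trans h')]
      · right
        intro r hr
        refine ⟨le_trans ?_ hr.1, hr.2.trans ?_⟩
        · calc pt k = min t (pt k) := (min_eq_right h).symm
            _ ≤ q k := le_max_right _ _
        · exact max_le h' (min_le_right _ _)
  have key : (∑ k ∈ Finset.range N,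
        (if L k then f (min t (pt (k + 1))) - f (min t (pt k)) else 0)) -
      (∑ k ∈ Finset.range N,
        (if L k then f (min s (pt (k + 1))) - f (min s (pt k)) else 0)) =
      ∑ k ∈ Finset.range N, (if L k then f (q (k + 1)) - f (q k) else 0) := by
    rw [← Finset.sum_sub_distrib]
    refine Finset.sum_congr rfl fun k _ => ?_
    by_cases hk : L k
    · simp only [if_pos hk]
      have e : ∀ d : I, min s d = min s (min t d) := fun d => by
        rw [← min_assoc, min_eq_left hst]
      have h1 := minmax f s (min t (pt (k + 1)))
      have h2 := minmax f s (min t (pt k))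
      rw [e (pt (k + 1)), e (pt k)]
      simp only [hq]
      linarith
    · simp only [if_neg hk, sub_zero]
  constructor
  · intro hsubU
    have hz : ∀ k ∈ Finset.range N,
        (if L k then f (q (k + 1)) - f (q k) else 0) = 0 := by
      intro k _
      by_cases hk : L k
      · rw [if_pos hk]
        rcases hpiece k with h | h
        · rw [h, sub_self]
        · have hWV : Icc (q k) (q (k + 1)) ⊆ ⇑γ ⁻¹' (U ∩ V) := by
            intro r hr
            refine ⟨hsubU (hqst k hr), ?_⟩
            have := hL k (h hr)
            simpa [c, hk] using this
          have hx := chi_comp_eq (U := U) (V := V) (b := b) γ (hqmono k) hWV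
          simp only [hf]
          rw [hx, sub_self]
      · rw [if_neg hk]
    have := key.trans (Finset.sum_eq_zero hz)
    linarith
  · intro hsubV
    have tele : ∑ k ∈ Finset.range N, (f (q (k + 1)) - f (q k)) = f t - f s := by
      rw [Finset.sum_range_sub (fun k => f (q k)), hqN, hq0]
    have hz : ∀ k ∈ Finset.range N,
        (if L k then f (q (k + 1)) - f (q k) else 0) = f (q (k + 1)) - f (q k) := by
      intro k _
      by_cases hk : L k
      · rw [if_pos hk]
      · rw [if_neg hk]
        rcases hpiece k with h | h
        · rw [h, sub_self]
        · have hWV : Icc (q k) (q (k + 1)) ⊆ ⇑γ ⁻¹' (U ∩ V) := by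
            intro r hr
            refine ⟨?_, hsubV (hqst k hr)⟩
            have := hL k (h hr)
            simpa [c, hk] using this
          have hx := chi_comp_eq (U := U) (V := V) (b := b) γ (hqmono k) hWV
          simp only [hf]
          rw [hx, sub_self]
    have := key.trans ((Finset.sum_congr rfl hz).trans tele)
    linarith

lemma isCount_unique {U V : Set X} {b : X} (hUo : IsOpen U) (hVo : IsOpen V)
    (hUV : U ∪ V = univ) (γ : C(I, X)) {g g' : I → ℤ}
    (hg : IsCount U V b γ g) (hg' : IsCount U V b γ g') :
    g 1 - g 0 = g' 1 - g' 0 := by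
  classical
  set c : Bool → Set I := fun i => if i then ⇑γ ⁻¹' V else ⇑γ ⁻¹' U with hc
  have hco : ∀ i, IsOpen (c i) := by
    rintro (_ | _) <;> simp only [c, if_true, if_false, Bool.false_eq_true] <;>
      [exact hUo.preimage γ.continuous; exact hVo.preimage γ.continuous]
  have hcov : univ ⊆ ⋃ i, c i := by
    intro x _
    have hx : γ x ∈ U ∪ V := by rw [hUV]; trivial
    rcases hx with hx | hx
    · exact mem_iUnion.2 ⟨false, by simpa [c] using hx⟩
    · exact mem_iUnion.2 ⟨true, by simpa [c] using hx⟩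
  obtain ⟨pt, hpt0, hmono, ⟨N, hptN⟩, hsub⟩ :=
    exists_monotone_Icc_subset_open_cover_unitInterval hco hcov
  choose L hL using hsub
  have e1 : g 1 - g 0 = ∑ k ∈ Finset.range N, (g (pt (k + 1)) - g (pt k)) := by
    rw [Finset.sum_range_sub (fun k => g (pt k)), hpt0, hptN N le_rfl]
  have e2 : g' 1 - g' 0 = ∑ k ∈ Finset.range N, (g' (pt (k + 1)) - g' (pt k)) := by
    rw [Finset.sum_range_sub (fun k => g' (pt k)), hpt0, hptN N le_rfl]
  rw [e1, e2]
  refine Finset.sum_congr rfl fun k _ => ?_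
  have hk := hmono (Nat.le_succ k)
  by_cases hLk : L k
  · have hsubV : Icc (pt k) (pt (k + 1)) ⊆ ⇑γ ⁻¹' V := by
      intro r hr; have := hL k hr; simpa [c, hLk] using this
    rw [(hg (pt k) (pt (k + 1)) hk).2 hsubV, (hg' (pt k) (pt (k + 1)) hk).2 hsubV]
  · have hsubU : Icc (pt k) (pt (k + 1)) ⊆ ⇑γ ⁻¹' U := by
      intro r hr; have := hL k hr; simpa [c, hLk] using this
    rw [(hg (pt k) (pt (k + 1)) hk).1 hsubU, (hg' (pt k) (pt (k + 1)) hk).1 hsubU]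
    simp

variable (U V : Set X) (b : X)

/-- The crossing number of a curve. -/
noncomputable def nval (hUo : IsOpen U) (hVo : IsOpen V) (hUV : U ∪ V = univ)
    (γ : C(I, X)) : ℤ :=
  (exists_isCount U V b hUo hVo hUV γ).choose 1 - (exists_isCount U V b hUo hVo hUV γ).choose 0

variable {hUo : IsOpen U} {hVo : IsOpen V} {hUV : U ∪ V = univ}

lemma nval_eq_of_isCount {γ : C(I, X)} {g : I → ℤ} (hg : IsCount U V b γ g) :
    nval U V b hUo hVo hUV γ = g 1 - g 0 :=
  isCount_unique hUo hVo hUV γ (exists_isCount U V b hUo hVo hUV γ).choose_spec hg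

lemma nval_of_mem_U {γ : C(I, X)} (h : ∀ r, γ r ∈ U) : nval U V b hUo hVo hUV γ = 0 := by
  obtain ⟨g, hg⟩ := exists_isCount U V b hUo hVo hUV γ
  rw [nval_eq_of_isCount U V b hg, (hg 0 1 (nonneg' : (0:I) ≤ 1)).1 fun r _ => h r, sub_self]

lemma nval_of_mem_V {γ : C(I, X)} (h : ∀ r, γ r ∈ V) :
    nval U V b hUo hVo hUV γ = chi U V b (γ 1) - chi U V b (γ 0) := by
  obtain ⟨g, hg⟩ := exists_isCount U V b hUo hVo hUV γ
  rw [nval_eq_of_isCount U V b hg, (hg 0 1 (nonneg' : (0:I) ≤ 1)).2 fun r _ => h r]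

/-- `r ↦ r/2` as a map `I → I`. -/
noncomputable def half (r : I) : I := ⟨r / 2, ⟨by linarith [r.2.1], by linarith [r.2.2]⟩⟩

/-- `r ↦ (r+1)/2` as a map `I → I`. -/
noncomputable def half' (r : I) : I := ⟨(r + 1) / 2, ⟨by linarith [r.2.1], by linarith [r.2.2]⟩⟩

lemma half_le_half {s t : I} (h : s ≤ t) : half s ≤ half t := by
  have : (s : ℝ) ≤ t := h
  show (s : ℝ) / 2 ≤ (t : ℝ) / 2
  linarith

lemma half'_le_half' {s t : I} (h : s ≤ t) : half' s ≤ half' t := by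
  have : (s : ℝ) ≤ t := h
  show ((s : ℝ) + 1) / 2 ≤ ((t : ℝ) + 1) / 2
  linarith

lemma trans_apply_left {x y z : X} (γa : Path x y) (γb : Path y z) (w : I)
    (h : (w : ℝ) ≤ 1 / 2) (hm : 2 * (w : ℝ) ∈ I) :
    (γa.trans γb) w = γa ⟨2 * (w : ℝ), hm⟩ := by
  rw [Path.trans_apply, dif_pos h]

lemma trans_apply_right {x y z : X} (γa : Path x y) (γb : Path y z) (w : I)
    (h : 1 / 2 ≤ (w : ℝ)) (hm : 2 * (w : ℝ) - 1 ∈ I) :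
    (γa.trans γb) w = γb ⟨2 * (w : ℝ) - 1, hm⟩ := by
  rw [Path.trans_apply]
  split_ifs with h'
  · have hw : (w : ℝ) = 1 / 2 := le_antisymm h' h
    have h1 : ∀ hp : 2 * (w : ℝ) ∈ I, γa ⟨2 * (w : ℝ), hp⟩ = y := fun hp => by
      have e : (⟨2 * (w : ℝ), hp⟩ : I) = 1 := Subtype.ext (by show 2 * (w : ℝ) = ((1 : I) : ℝ); rw [hw]; norm_num)
      rw [e, γa.target]
    have h2 : ∀ hp : 2 * (w : ℝ) - 1 ∈ I, γb ⟨2 * (w : ℝ) - 1, hp⟩ = y := fun hp => by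
      have e : (⟨2 * (w : ℝ) - 1, hp⟩ : I) = 0 := Subtype.ext (by show 2 * (w : ℝ) - 1 = ((0 : I) : ℝ); rw [hw]; norm_num)
      rw [e, γb.source]
    rw [h1, h2]
  · rfl

lemma nval_trans {x y z : X} (γa : Path x y) (γb : Path y z) :
    nval U V b hUo hVo hUV (γa.trans γb).toContinuousMap =
      nval U V b hUo hVo hUV γa.toContinuousMap + nval U V b hUo hVo hUV γb.toContinuousMap := by
  obtain ⟨g, hg⟩ := exists_isCount U V b hUo hVo hUV (γa.trans γb).toContinuousMap
  have key : ∀ w : I, (w : ℝ) ≤ 1 / 2 → ∀ hm : 2 * (w : ℝ) ∈ I,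
      (γa.trans γb).toContinuousMap w = γa.toContinuousMap ⟨2 * (w : ℝ), hm⟩ := by
    intro w h hm
    simpa using trans_apply_left γa γb w h hm
  have key' : ∀ w : I, 1 / 2 ≤ (w : ℝ) → ∀ hm : 2 * (w : ℝ) - 1 ∈ I,
      (γa.trans γb).toContinuousMap w = γb.toContinuousMap ⟨2 * (w : ℝ) - 1, hm⟩ := by
    intro w h hm
    simpa using trans_apply_right γa γb w h hm
  -- g ∘ half is a count for γa
  have hg1 : IsCount U V b γa.toContinuousMap (fun r => g (half r)) := by
    intro s t hst
    have h2 : half s ≤ half t := half_le_half hst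
    have hsub : ∀ (S : Set X), Icc s t ⊆ ⇑γa.toContinuousMap ⁻¹' S →
        Icc (half s) (half t) ⊆ ⇑(γa.trans γb).toContinuousMap ⁻¹' S := by
      intro S hS w hw
      have hw1 : (s : ℝ) / 2 ≤ (w : ℝ) := hw.1
      have hw2 : (w : ℝ) ≤ (t : ℝ) / 2 := hw.2
      have hle : (w : ℝ) ≤ 1 / 2 := by have := t.2.2; linarith
      have hm : 2 * (w : ℝ) ∈ I := ⟨by linarith [w.2.1], by linarith⟩
      have : (⟨2 * (w : ℝ), hm⟩ : I) ∈ Icc s t := by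
        constructor
        · show (s : ℝ) ≤ 2 * (w : ℝ); linarith
        · show 2 * (w : ℝ) ≤ (t : ℝ); linarith
      show (γa.trans γb).toContinuousMap w ∈ S
      rw [key w hle hm]
      exact hS this
    have hend : ∀ u : I, (γa.trans γb).toContinuousMap (half u) = γa.toContinuousMap u := by
      intro u
      have hle : ((half u : I) : ℝ) ≤ 1 / 2 := by
        show (u : ℝ) / 2 ≤ 1 / 2; linarith [u.2.2]
      have hm : 2 * ((half u : I) : ℝ) ∈ I := ⟨by simp [half]; linarith [u.2.1], by
        show 2 * ((u : ℝ) / 2) ≤ 1; linarith [u.2.2]⟩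
      rw [key (half u) hle hm]
      congr 1
      ext
      show 2 * ((u : ℝ) / 2) = u
      ring
    constructor
    · intro hU'
      exact (hg (half s) (half t) h2).1 (hsub U hU')
    · intro hV'
      have := (hg (half s) (half t) h2).2 (hsub V hV')
      rwa [hend s, hend t] at this
  have hg2 : IsCount U V b γb.toContinuousMap (fun r => g (half' r)) := by
    intro s t hst
    have h2 : half' s ≤ half' t := half'_le_half' hst
    have hsub : ∀ (S : Set X), Icc s t ⊆ ⇑γb.toContinuousMap ⁻¹' S →
        Icc (half' s) (half' t) ⊆ ⇑(γa.trans γb).toContinuousMap ⁻¹' S := by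
      intro S hS w hw
      have hw1 : ((s : ℝ) + 1) / 2 ≤ (w : ℝ) := hw.1
      have hw2 : (w : ℝ) ≤ ((t : ℝ) + 1) / 2 := hw.2
      have hle : 1 / 2 ≤ (w : ℝ) := by have := s.2.1; linarith
      have hm : 2 * (w : ℝ) - 1 ∈ I := ⟨by linarith, by linarith [w.2.2]⟩
      have : (⟨2 * (w : ℝ) - 1, hm⟩ : I) ∈ Icc s t := by
        constructor
        · show (s : ℝ) ≤ 2 * (w : ℝ) - 1; linarith
        · show 2 * (w : ℝ) - 1 ≤ (t : ℝ); linarith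
      show (γa.trans γb).toContinuousMap w ∈ S
      rw [key' w hle hm]
      exact hS this
    have hend : ∀ u : I, (γa.trans γb).toContinuousMap (half' u) = γb.toContinuousMap u := by
      intro u
      have hle : 1 / 2 ≤ ((half' u : I) : ℝ) := by
        show 1 / 2 ≤ ((u : ℝ) + 1) / 2; linarith [u.2.1]
      have hm : 2 * ((half' u : I) : ℝ) - 1 ∈ I :=
        ⟨by show 0 ≤ 2 * (((u : ℝ) + 1) / 2) - 1; linarith [u.2.1],
         by show 2 * (((u : ℝ) + 1) / 2) - 1 ≤ 1; linarith [u.2.2]⟩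
      rw [key' (half' u) hle hm]
      congr 1
      ext
      show 2 * (((u : ℝ) + 1) / 2) - 1 = u
      ring
    constructor
    · intro hU'
      exact (hg (half' s) (half' t) h2).1 (hsub U hU')
    · intro hV'
      have := (hg (half' s) (half' t) h2).2 (hsub V hV')
      rwa [hend s, hend t] at this
  have e1 : nval U V b hUo hVo hUV γa.toContinuousMap = g (half 1) - g (half 0) :=
    nval_eq_of_isCount U V b hg1
  have e2 : nval U V b hUo hVo hUV γb.toContinuousMap = g (half' 1) - g (half' 0) :=
    nval_eq_of_isCount U V b hg2
  have e3 : nval U V b hUo hVo hUV (γa.trans γb).toContinuousMap = g 1 - g 0 :=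
    nval_eq_of_isCount U V b hg
  have h10 : half 0 = 0 := Subtype.ext (by show (0 : ℝ) / 2 = 0; norm_num)
  have h11 : half 1 = half' 0 := Subtype.ext (by show (1 : ℝ) / 2 = (0 + 1) / 2; norm_num)
  have h12 : half' 1 = 1 := Subtype.ext (by show ((1 : ℝ) + 1) / 2 = 1; norm_num)
  rw [e1, e2, e3, h10, h11, h12]
  ring

lemma nval_homotopic {p q : X} (γ₀ γ₁ : Path p q) (hom : γ₀.Homotopic γ₁) :
    nval U V b hUo hVo hUV γ₀.toContinuousMap = nval U V b hUo hVo hUV γ₁.toContinuousMap := by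
  classical
  obtain ⟨H⟩ := hom
  set HC : C(I × I, X) := H.toHomotopy.toContinuousMap with hHC
  set c : Bool → Set (I × I) := fun i => if i then ⇑HC ⁻¹' V else ⇑HC ⁻¹' U with hc
  have hco : ∀ i, IsOpen (c i) := by
    rintro (_ | _) <;> simp only [c, if_true, if_false, Bool.false_eq_true] <;>
      [exact hUo.preimage HC.continuous; exact hVo.preimage HC.continuous]
  have hcov : univ ⊆ ⋃ i, c i := by
    intro x _
    have hx : HC x ∈ U ∪ V := by rw [hUV]; trivial
    rcases hx with hx | hx
    · exact mem_iUnion.2 ⟨false, by simpa [c] using hx⟩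
    · exact mem_iUnion.2 ⟨true, by simpa [c] using hx⟩
  obtain ⟨pt, hpt0, hmono, ⟨N, hptN⟩, hsub⟩ :=
    exists_monotone_Icc_subset_open_cover_unitInterval_prod_self hco hcov
  choose L hL using hsub
  set f : X → ℤ := fun z => chi U V b z with hf
  set row : ℕ → C(I, X) := fun j => HC.comp ⟨fun x => (pt j, x), by fun_prop⟩ with hrow
  -- increments of any count for a row, along the grid
  have hinc : ∀ j j' k, pt j' ∈ Icc (pt j) (pt (j + 1)) → ∀ g : I → ℤ,
      IsCount U V b (row j') g →
      g (pt (k + 1)) - g (pt k) =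
        if L j k then f (HC (pt j', pt (k + 1))) - f (HC (pt j', pt k)) else 0 := by
    intro j j' k hj' g hg
    have hkk := hmono (Nat.le_succ k)
    by_cases hLk : L j k
    · rw [if_pos hLk]
      have hsubV : Icc (pt k) (pt (k + 1)) ⊆ ⇑(row j') ⁻¹' V := by
        intro x hx
        have : (pt j', x) ∈ Icc (pt j) (pt (j + 1)) ×ˢ Icc (pt k) (pt (k + 1)) := ⟨hj', hx⟩
        have := hL j k this
        simpa [c, hLk, row] using this
      exact (hg (pt k) (pt (k + 1)) hkk).2 hsubV
    · rw [if_neg hLk]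
      have hsubU : Icc (pt k) (pt (k + 1)) ⊆ ⇑(row j') ⁻¹' U := by
        intro x hx
        have : (pt j', x) ∈ Icc (pt j) (pt (j + 1)) ×ˢ Icc (pt k) (pt (k + 1)) := ⟨hj', hx⟩
        have := hL j k this
        simpa [c, hLk, row] using this
      rw [(hg (pt k) (pt (k + 1)) hkk).1 hsubU, sub_self]
  have hnrow : ∀ j j', pt j' ∈ Icc (pt j) (pt (j + 1)) →
      nval U V b hUo hVo hUV (row j') =
        ∑ k ∈ Finset.range N,
          (if L j k then f (HC (pt j', pt (k + 1))) - f (HC (pt j', pt k)) else 0) := by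
    intro j j' hj'
    obtain ⟨g, hg⟩ := exists_isCount U V b hUo hVo hUV (row j')
    rw [nval_eq_of_isCount U V b hg]
    have e : g 1 - g 0 = ∑ k ∈ Finset.range N, (g (pt (k + 1)) - g (pt k)) := by
      rw [Finset.sum_range_sub (fun k => g (pt k)), hpt0, hptN N le_rfl]
    rw [e]
    exact Finset.sum_congr rfl fun k _ => hinc j j' k hj' g hg
  -- vertical edges
  have hv : ∀ j k, (∀ r ∈ Icc (pt j) (pt (j + 1)), HC (r, pt k) ∈ U ∩ V) →
      f (HC (pt (j + 1), pt k)) - f (HC (pt j, pt k)) = 0 := by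
    intro j k hsub'
    have hcol : Icc (pt j) (pt (j + 1)) ⊆
        ⇑(HC.comp ⟨fun r => (r, pt k), by fun_prop⟩) ⁻¹' (U ∩ V) := by
      intro r hr
      simpa using hsub' r hr
    have := chi_comp_eq (U := U) (V := V) (b := b)
      (HC.comp ⟨fun r => (r, pt k), by fun_prop⟩) (hmono (Nat.le_succ j)) hcol
    simp only [ContinuousMap.comp_apply, ContinuousMap.coe_mk] at this
    show chi U V b (HC (pt (j + 1), pt k)) - chi U V b (HC (pt j, pt k)) = 0
    rw [← this, sub_self]
  have hbdry : ∀ j k, pt k = 0 ∨ pt k = 1 →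
      f (HC (pt (j + 1), pt k)) - f (HC (pt j, pt k)) = 0 := by
    intro j k hk
    have e : ∀ j' : ℕ, HC (pt j', pt k) = γ₀.toContinuousMap (pt k) := by
      intro j'
      have hmem : pt k ∈ ({0, 1} : Set I) := by
        rcases hk with hk | hk <;> rw [hk] <;> simp
      exact H.eq_fst (pt j') hmem
    rw [e (j + 1), e j, sub_self]
  -- mixed labels kill vertical edges
  have hmix : ∀ j k, L j k ≠ L j (k + 1) →
      f (HC (pt (j + 1), pt (k + 1))) - f (HC (pt j, pt (k + 1))) = 0 := by
    intro j k hne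
    refine hv j (k + 1) fun r hr => ?_
    have m1 : (r, pt (k + 1)) ∈ Icc (pt j) (pt (j + 1)) ×ˢ Icc (pt k) (pt (k + 1)) :=
      ⟨hr, ⟨hmono (Nat.le_succ k), le_rfl⟩⟩
    have m2 : (r, pt (k + 1)) ∈ Icc (pt j) (pt (j + 1)) ×ˢ Icc (pt (k + 1)) (pt (k + 2)) :=
      ⟨hr, ⟨le_rfl, hmono (Nat.le_succ (k + 1))⟩⟩
    have h1 := hL j k m1
    have h2 := hL j (k + 1) m2
    cases hb : L j k
    · have hb2 : L j (k + 1) = true := by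
        cases hb2 : L j (k + 1)
        · exact absurd (hb.trans hb2.symm) hne
        · rfl
      rw [hb] at h1; rw [hb2] at h2
      exact ⟨by simpa [c] using h1, by simpa [c] using h2⟩
    · have hb2 : L j (k + 1) = false := by
        cases hb2 : L j (k + 1)
        · rfl
        · exact absurd (hb.trans hb2.symm) hne
      rw [hb] at h1; rw [hb2] at h2
      exact ⟨by simpa [c] using h2, by simpa [c] using h1⟩
  -- one row step
  have hstep : ∀ j, nval U V b hUo hVo hUV (row (j + 1)) = nval U V b hUo hVo hUV (row j) := by
    intro j
    have hj0 : pt j ∈ Icc (pt j) (pt (j + 1)) := ⟨le_rfl, hmono (Nat.le_succ j)⟩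
    have hj1 : pt (j + 1) ∈ Icc (pt j) (pt (j + 1)) := ⟨hmono (Nat.le_succ j), le_rfl⟩
    rw [hnrow j (j + 1) hj1, hnrow j j hj0]
    set v : ℕ → ℤ := fun k => f (HC (pt (j + 1), pt k)) - f (HC (pt j, pt k)) with hvdef
    set vt : ℕ → ℤ := fun k => if k < N ∧ L j k then v k else 0 with hvt
    have hvN : v N = 0 := hbdry j N (Or.inr (hptN N le_rfl))
    have hv0 : v 0 = 0 := hbdry j 0 (Or.inl hpt0)
    have key : ∀ k ∈ Finset.range N,
        ((if L j k then f (HC (pt (j + 1), pt (k + 1))) - f (HC (pt (j + 1), pt k)) else 0) -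
         (if L j k then f (HC (pt j, pt (k + 1))) - f (HC (pt j, pt k)) else 0)) =
        vt (k + 1) - vt k := by
      intro k hk
      rw [Finset.mem_range] at hk
      by_cases hLk : L j k
      · rw [if_pos hLk, if_pos hLk]
        have e1 : vt k = v k := by simp only [hvt]; exact if_pos ⟨hk, hLk⟩
        have e2 : vt (k + 1) = v (k + 1) := by
          simp only [hvt]
          by_cases h2 : k + 1 < N ∧ L j (k + 1) = true
          · exact if_pos h2
          · rw [if_neg h2]
            rcases Nat.lt_or_ge (k + 1) N with hlt | hge
            · have hLnext : L j (k + 1) = false := by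
                cases hx : L j (k + 1)
                · rfl
                · exact absurd ⟨hlt, hx⟩ h2
              have := hmix j k (by rw [hLk, hLnext]; simp)
              exact this.symm
            · have : pt (k + 1) = 1 := hptN (k + 1) hge
              exact (hbdry j (k + 1) (Or.inr this)).symm
        rw [e1, e2]
        simp only [hvdef]
        ring
      · rw [if_neg hLk, if_neg hLk]
        have e1 : vt k = 0 := by simp only [hvt]; exact if_neg fun hcc => hLk hcc.2
        have e2 : vt (k + 1) = 0 := by
          simp only [hvt]
          by_cases h2 : k + 1 < N ∧ L j (k + 1) = true
          · rw [if_pos h2]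
            refine hmix j k ?_
            intro hcc
            rw [h2.2] at hcc
            exact hLk hcc
          · exact if_neg h2
        rw [e1, e2]
    rw [← sub_eq_zero, ← Finset.sum_sub_distrib]
    have := (Finset.sum_congr rfl key).trans (Finset.sum_range_sub vt N)
    rw [this]
    have evN : vt N = 0 := by
      simp only [hvt]; exact if_neg fun hcc => absurd hcc.1 (lt_irrefl N)
    have ev0 : vt 0 = 0 := by
      simp only [hvt]
      by_cases h0 : 0 < N ∧ L j 0 = true
      · rw [if_pos h0]; exact hv0
      · exact if_neg h0
    rw [evN, ev0, sub_self]
  have hall : ∀ j, nval U V b hUo hVo hUV (row j) = nval U V b hUo hVo hUV (row 0) := by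
    intro j
    induction j with
    | zero => rfl
    | succ n ih => rw [hstep n, ih]
  have hrow0 : row 0 = γ₀.toContinuousMap := by
    ext x
    show HC (pt 0, x) = γ₀.toContinuousMap x
    rw [hpt0]
    exact H.toHomotopy.apply_zero x
  have hrowN : row N = γ₁.toContinuousMap := by
    ext x
    show HC (pt N, x) = γ₁.toContinuousMap x
    rw [hptN N le_rfl]
    exact H.toHomotopy.apply_one x
  calc nval U V b hUo hVo hUV γ₀.toContinuousMap
      = nval U V b hUo hVo hUV (row 0) := by rw [hrow0]
    _ = nval U V b hUo hVo hUV (row N) := (hall N).symm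
    _ = nval U V b hUo hVo hUV γ₁.toContinuousMap := by rw [hrowN]

end VKRetract

open VKRetract

/-- If `X = U ∪ V` with `U`, `V` open and path-connected and the intersection
`W = U ∩ V` has at least two path-components, then for any `p ∈ W` the fundamental
group `π₁(X, p)` has `ℤ` as a retract, hence is nontrivial. Consequently, if `X` is
simply connected then the intersection of any two open path-connected subsets covering
`X` is path-connected or empty. -/
theorem fundamentalGroup_int_retract {X : Type*} [TopologicalSpace X]
    (U V : Set X) (hUopen : IsOpen U) (hVopen : IsOpen V)
    (hUV : U ∪ V = Set.univ)
    (hUpc : IsPathConnected U) (hVpc : IsPathConnected V) :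
    ((∃ a ∈ U ∩ V, ∃ b ∈ U ∩ V, ¬ JoinedIn (U ∩ V) a b) →
      ∀ p ∈ U ∩ V,
        (∃ (ι : Multiplicative ℤ →* FundamentalGroup X p)
           (ρ : FundamentalGroup X p →* Multiplicative ℤ),
            ρ.comp ι = MonoidHom.id (Multiplicative ℤ)) ∧
        Nontrivial (FundamentalGroup X p)) ∧
    (SimplyConnectedSpace X → U ∩ V = ∅ ∨ IsPathConnected (U ∩ V)) := by
  classical
  have main : (∃ a ∈ U ∩ V, ∃ b ∈ U ∩ V, ¬ JoinedIn (U ∩ V) a b) →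
      ∀ p ∈ U ∩ V,
        (∃ (ι : Multiplicative ℤ →* FundamentalGroup X p)
           (ρ : FundamentalGroup X p →* Multiplicative ℤ),
            ρ.comp ι = MonoidHom.id (Multiplicative ℤ)) ∧
        Nontrivial (FundamentalGroup X p) := by
    rintro ⟨a, haW, b, hbW, hab⟩ p hpW
    -- the crossing-number function on homotopy classes of loops at p
    set nQ : Path.Homotopic.Quotient p p → ℤ :=
      Quotient.lift (fun γc : Path p p => nval U V b hUopen hVopen hUV γc.toContinuousMap)
        (fun γa γb h => nval_homotopic U V b γa γb h) with hnQ
    have hnQcomp : ∀ u w : Path.Homotopic.Quotient p p,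
        nQ (u.trans w) = nQ u + nQ w := by
      intro u w
      refine Quotient.inductionOn₂ u w fun γa γb => ?_
      change nQ (Path.Homotopic.Quotient.mk (γa.trans γb)) = _
      exact nval_trans U V b γa γb
    set ρ0 : FundamentalGroup X p → Multiplicative ℤ :=
      fun e => Multiplicative.ofAdd (nQ (FundamentalGroup.toPath e)) with hρ0
    have hmul : ∀ e f : FundamentalGroup X p, ρ0 (e * f) = ρ0 e * ρ0 f := by
      intro e f
      have h1 : FundamentalGroup.toPath (e * f) = Path.Homotopic.Quotient.trans (FundamentalGroup.toPath f) (FundamentalGroup.toPath e) := rfl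
      simp only [hρ0, h1, hnQcomp]
      rw [← ofAdd_add, add_comm]
    set ρ : FundamentalGroup X p →* Multiplicative ℤ := MonoidHom.mk' ρ0 hmul with hρ
    -- the basic loop at p
    obtain ⟨pα, hpα⟩ := hUpc.joinedIn p hpW.1 a haW.1
    obtain ⟨pu, hpu⟩ := hUpc.joinedIn a haW.1 b hbW.1
    obtain ⟨pv, hpv⟩ := hVpc.joinedIn a haW.2 b hbW.2
    set loop : Path p p := pα.trans (pv.trans (pu.symm.trans pα.symm)) with hloop
    have hchib : chi U V b b = 1 := if_pos (JoinedIn.refl hbW)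
    have hchia : chi U V b a = 0 := if_neg fun h => hab h.symm
    have hnloop : nval U V b hUopen hVopen hUV loop.toContinuousMap = 1 := by
      rw [hloop, nval_trans U V b, nval_trans U V b, nval_trans U V b]
      have e1 : nval U V b hUopen hVopen hUV pα.toContinuousMap = 0 :=
        nval_of_mem_U U V b fun r => hpα r
      have e2 : nval U V b hUopen hVopen hUV pu.symm.toContinuousMap = 0 :=
        nval_of_mem_U U V b fun r => hpu (unitInterval.symm r)
      have e3 : nval U V b hUopen hVopen hUV pα.symm.toContinuousMap = 0 :=
        nval_of_mem_U U V b fun r => hpα (unitInterval.symm r)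
      have e4 : nval U V b hUopen hVopen hUV pv.toContinuousMap =
          chi U V b b - chi U V b a := by
        rw [nval_of_mem_V U V b fun r => hpv r]
        simp
      rw [e1, e2, e3, e4, hchib, hchia]
      ring
    set hommk : (⟨p⟩ : FundamentalGroupoid X) ⟶ ⟨p⟩ := ⟦loop⟧ with hhommk
    set ℓ : FundamentalGroup X p :=
      hommk with hℓ
    have hℓhom : FundamentalGroup.toPath ℓ = hommk :=
      rfl
    have hρℓ : ρ ℓ = Multiplicative.ofAdd 1 := by
      show Multiplicative.ofAdd (nQ (FundamentalGroup.toPath ℓ)) = Multiplicative.ofAdd 1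
      rw [hℓhom]
      have : nQ hommk = 1 := hnloop
      rw [this]
    refine ⟨⟨zpowersHom _ ℓ, ρ, ?_⟩, ⟨ℓ, 1, ?_⟩⟩
    · apply MonoidHom.ext_mint
      rw [MonoidHom.comp_apply, zpowersHom_apply, MonoidHom.id_apply]
      simp only [toAdd_ofAdd, zpow_one]
      exact hρℓ
    · intro h
      rw [h, map_one] at hρℓ
      exact one_ne_zero (ofAdd_eq_one.mp hρℓ.symm)
  refine ⟨main, ?_⟩
  intro hsc
  by_cases he : U ∩ V = ∅
  · exact Or.inl he
  · right
    by_contra hnpc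
    obtain ⟨a, ha⟩ := Set.nonempty_iff_ne_empty.2 he
    have h1 : ¬ ∀ y ∈ U ∩ V, JoinedIn (U ∩ V) a y := by
      intro h
      exact hnpc ⟨a, ha, fun {y} hy => h y hy⟩
    push_neg at h1
    obtain ⟨bb, hbb, hnj⟩ := h1
    have h2 := (main ⟨a, ha, bb, hbb, hnj⟩ a ha).2
    haveI : Subsingleton (FundamentalGroup X a) :=
      ⟨fun e f => Subsingleton.elim (α := Path.Homotopic.Quotient a a) _ _⟩
    exact false_of_nontrivial_of_subsingleton (FundamentalGroup X a)
end
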